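/- arXiv:1303.1117 — 5 statements merged into one kernel-verified Lean document; each statement's English description precedes it below -/
import Mathlib

section
/- Let G, M, F be subsets of a finite-dimensional real vector space with F and M closed and the duals defined by F̃ = −(∼Int F), M̃ = −(∼Int M). If pointwise sums satisfy G + M ⊂ F, then G + F̃ ⊂ M̃, and conversely. -/
open Pointwise

/-- The Dirichlet dual of a set `F`: `F̃ = −(∼ Int F)`. -/
def dirichletDual {J : Type*} [NormedAddCommGroup J] [NormedSpace ℝ J] (F : Set J) : Set J :=
  -((interior F)ᶜ)

/-- **Lemma 4.4.1.** For subsets `G, M, F` of a finite-dimensional real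
vector space with `F` and `M` closed (and satisfying the topological condition of a
subequation), the Minkowski sums satisfy `G + M ⊆ F ↔ G + F̃ ⊆ M̃`. -/
theorem sum_dual_equiv {J : Type*} [NormedAddCommGroup J] [NormedSpace ℝ J]
    [FiniteDimensional ℝ J] (G M F : Set J)
    (hF : IsClosed F) (hFT : F = closure (interior F))
    (hM : IsClosed M) (hMT : M = closure (interior M)) :
    G + M ⊆ F ↔ G + dirichletDual F ⊆ dirichletDual M := by
  constructor
  · intro h z hz
    obtain ⟨g, hg, x, hx, rfl⟩ := hz
    simp only [dirichletDual, Set.mem_neg, Set.mem_compl_iff] at hx ⊢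
    intro hmem
    have hopen : IsOpen ({g} + interior M) := isOpen_interior.add_left
    have hsub : {g} + interior M ⊆ F := by
      refine subset_trans ?_ h
      exact Set.add_subset_add (by simpa using hg) interior_subset
    have hint : {g} + interior M ⊆ interior F := interior_maximal hsub hopen
    have : g + -(g + x) ∈ {g} + interior M :=
      Set.add_mem_add (Set.mem_singleton g) hmem
    have e : g + -(g + x) = -x := by abel
    rw [e] at this
    exact hx (hint this)
  · intro h z hz
    obtain ⟨g, hg, m, hm, rfl⟩ := hz
    have key : ∀ m' ∈ interior M, g + m' ∈ F := by
      intro m' hm'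
      by_contra hc
      have hx : -(g + m') ∈ dirichletDual F := by
        simp only [dirichletDual, Set.mem_neg, Set.mem_compl_iff, neg_neg]
        exact fun hmem => hc (interior_subset hmem)
      have := h (Set.add_mem_add hg hx)
      simp only [dirichletDual, Set.mem_neg, Set.mem_compl_iff] at this
      have e : -(g + -(g + m')) = m' := by abel
      rw [e] at this
      exact this hm'
    have hm' : m ∈ closure (interior M) := by rwa [← hMT]
    have : g + m ∈ closure F :=
      map_mem_closure (continuous_const.add continuous_id) hm' (fun y hy => key y hy)
    rwa [hF.closure_eq] at this
end

section
/- If M is a monotonicity cone for a closed set F (i.e., F + M ⊂ F), then F̃ + M ⊂ F̃ and F + F̃ ⊂ M̃. -/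
open Pointwise

/-- **Lemma 4.1.2.** If `M` is a monotonicity cone for a closed set `F`
(i.e. `F + M ⊆ F`, with `M` a closed convex cone with vertex at the origin and nonempty
interior), then `F̃ + M ⊆ F̃` and `F + F̃ ⊆ M̃`. -/
theorem monotonicity_dual {J : Type*} [NormedAddCommGroup J] [NormedSpace ℝ J]
    [FiniteDimensional ℝ J] (F M : Set J)
    (hF : IsClosed F) (hM : IsClosed M) (hM0 : (0 : J) ∈ M)
    (hMcone : ∀ t : ℝ, 0 ≤ t → ∀ x ∈ M, t • x ∈ M) (hMconv : Convex ℝ M)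
    (hMint : (interior M).Nonempty)
    (hFM : F + M ⊆ F) :
    dirichletDual F + M ⊆ dirichletDual F ∧ F + dirichletDual F ⊆ dirichletDual M := by
  have key1 : ∀ y ∈ interior F, ∀ m ∈ M, y + m ∈ interior F := by
    intro y hy m hm
    have hsub : interior F + ({m} : Set J) ⊆ F := by
      rintro z ⟨a, ha, b, hb, rfl⟩
      exact hFM (Set.add_mem_add (interior_subset ha) (hb ▸ hm))
    have hopen : IsOpen (interior F + ({m} : Set J)) := isOpen_interior.add_right
    exact interior_maximal hsub hopen (Set.add_mem_add hy rfl)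
  have key2 : ∀ f ∈ F, ∀ m ∈ interior M, f + m ∈ interior F := by
    intro f hf m hm
    have hsub : ({f} : Set J) + interior M ⊆ F := by
      rintro z ⟨a, ha, b, hb, rfl⟩
      exact hFM (Set.add_mem_add (ha ▸ hf) (interior_subset hb))
    have hopen : IsOpen (({f} : Set J) + interior M) := isOpen_interior.add_left
    exact interior_maximal hsub hopen (Set.add_mem_add rfl hm)
  constructor
  · rintro z ⟨x, hx, m, hm, rfl⟩
    simp only [dirichletDual, Set.mem_neg, Set.mem_compl_iff] at hx ⊢
    intro h
    have h2 := key1 _ h m hm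
    have : -(x + m) + m = -x := by abel
    exact hx (this ▸ h2)
  · rintro z ⟨f, hf, x, hx, rfl⟩
    simp only [dirichletDual, Set.mem_neg, Set.mem_compl_iff] at hx ⊢
    intro h
    have h2 := key2 f hf _ h
    have : f + -(f + x) = -x := by abel
    exact hx (this ▸ h2)
end

section
/- For real p with 1 ≤ p ≤ n, the set 𝒫(p) = {A ∈ Sym²(ℝⁿ) : λ_1(A) + … + λ_{⌊p⌋}(A) + (p − ⌊p⌋)λ_{⌊p⌋+1}(A) ≥ 0} is a closed convex cone containing the positive semidefinite matrices. -/
open Pointwise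

/-- The increasingly ordered eigenvalues `λ_1(A) ≤ … ≤ λ_n(A)` of a symmetric matrix
(indexed by `Fin n`, so index `i` corresponds to `λ_{i+1}`). -/
noncomputable def sortedEig {n : ℕ} (A : Matrix (Fin n) (Fin n) ℝ) (hA : A.IsHermitian) :
    Fin n → ℝ :=
  hA.eigenvalues ∘ Tuple.sort hA.eigenvalues

/-- The partial eigenvalue sum `λ_1(A) + ⋯ + λ_{⌊p⌋}(A) + (p − ⌊p⌋) λ_{⌊p⌋+1}(A)`. -/
noncomputable def pSum {n : ℕ} (p : ℝ) (A : Matrix (Fin n) (Fin n) ℝ)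
    (hA : A.IsHermitian) : ℝ :=
  ∑ i : Fin n,
    (if (i : ℕ) + 1 ≤ ⌊p⌋₊ then (1 : ℝ) else if (i : ℕ) = ⌊p⌋₊ then p - ⌊p⌋₊ else 0) *
      sortedEig A hA i

/-- The generalized `p`-convexity cone `𝒫(p) ⊂ Sym²(ℝⁿ)`. -/
noncomputable def pCone (n : ℕ) (p : ℝ) : Set (Matrix (Fin n) (Fin n) ℝ) :=
  {A | ∃ hA : A.IsHermitian, 0 ≤ pSum p A hA}

/-!
Write `k = ⌊p⌋` and `θ = p - k ∈ [0, 1)`, and let `S_m(A)` be the sum of the `m` smallest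
eigenvalues of `A`; then the defining quantity of `𝒫(p)` is `(1 - θ) S_k(A) + θ S_{k+1}(A)`.
By Ky Fan's minimum principle, `S_m(A)` is the minimum of `∑ i, ⟪vᵢ, A vᵢ⟫` over orthonormal
`m`-frames `v`: in an eigenbasis `(bⱼ)` of `A` the frame gives `λⱼ` the weight
`dⱼ = ∑ i, ⟪bⱼ, vᵢ⟫² ∈ [0, 1]` (Bessel), these weights add up to `m`, and such a weighting is
smallest when it puts weight one on the `m` smallest eigenvalues. So `𝒫(p)` is the set of
symmetric matrices on which a family of linear functionals is nonnegative: the intersection of a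
closed subspace with a dual cone, which is a closed convex cone.
-/

open Matrix Finset
open scoped RealInnerProductSpace

lemma Fin.sum_filter_val_lt_le_sum_mul_of_monotone {n m : ℕ} (hm : m ≤ n) {g e : Fin n → ℝ}
    (hg : Monotone g) (he0 : ∀ i, 0 ≤ e i) (he1 : ∀ i, e i ≤ 1) (he : ∑ i, e i = m) :
    ∑ i : Fin n with i.val < m, g i ≤ ∑ i, e i * g i := by
  obtain ⟨t, hlt, hge⟩ : ∃ t, (∀ i : Fin n, (i : ℕ) < m → g i ≤ t) ∧
      ∀ i : Fin n, m ≤ (i : ℕ) → t ≤ g i := by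
    rcases Nat.eq_zero_or_pos m with rfl | hm0
    · exact ⟨⨅ i, g i, fun i hi => absurd hi (Nat.not_lt_zero _),
        fun i _ => ciInf_le (Finite.bddBelow_range g) i⟩
    · exact ⟨g ⟨m - 1, by omega⟩, fun i hi => hg (Fin.mk_le_mk.mpr (by omega)),
        fun i hi => hg (Fin.mk_le_mk.mpr (by omega))⟩
  -- Pointwise `(𝟙{i < m} - e i) * (g i - t) ≤ 0`; summed, the `t`-terms cancel as `∑ e = m`.
  have hpoint : ∀ i : Fin n, (if (i : ℕ) < m then g i else 0) ≤
      e i * g i + t * ((if (i : ℕ) < m then 1 else 0) - e i) := by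
    intro i
    split_ifs with h
    · nlinarith [hlt i h, he1 i]
    · nlinarith [hge i (not_lt.mp h), he0 i]
  have hcard : ∑ i : Fin n, (if (i : ℕ) < m then (1 : ℝ) else 0) = m := by
    rw [← Finset.sum_filter, Finset.sum_const, Fin.card_filter_val_lt, min_eq_right hm,
      nsmul_one]
  calc ∑ i : Fin n with i.val < m, g i
      = ∑ i : Fin n, (if (i : ℕ) < m then g i else 0) := Finset.sum_filter _ _
    _ ≤ ∑ i, (e i * g i + t * ((if (i : ℕ) < m then 1 else 0) - e i)) :=
      sum_le_sum fun i _ => hpoint i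
    _ = ∑ i, e i * g i := by
      rw [Finset.sum_add_distrib, ← Finset.mul_sum, Finset.sum_sub_distrib, hcard, he]
      ring

section Spectral

variable {ι n : Type*} [Fintype ι] [Fintype n] [DecidableEq n]

noncomputable def compressionTrace (v : ι → EuclideanSpace ℝ n) :
    Module.Dual ℝ (Matrix n n ℝ) where
  toFun A := ∑ i, ⟪v i, toEuclideanLin A (v i)⟫
  map_add' A B := by simp [inner_add_right, Finset.sum_add_distrib]
  map_smul' c A := by simp [inner_smul_right, Finset.mul_sum]

lemma compressionTrace_apply (v : ι → EuclideanSpace ℝ n) (A : Matrix n n ℝ) :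
    compressionTrace v A = ∑ i, ⟪v i, toEuclideanLin A (v i)⟫ :=
  rfl

variable {A : Matrix n n ℝ} (hA : A.IsHermitian)
include hA

lemma Matrix.IsHermitian.toEuclideanLin_eigenvectorBasis (j : n) :
    toEuclideanLin A (hA.eigenvectorBasis j) = hA.eigenvalues j • hA.eigenvectorBasis j :=
  congrArg (WithLp.toLp 2) (hA.mulVec_eigenvectorBasis j)

lemma Matrix.IsHermitian.inner_toEuclideanLin_self (x : EuclideanSpace ℝ n) :
    ⟪x, toEuclideanLin A x⟫ = ∑ j, hA.eigenvalues j * ⟪hA.eigenvectorBasis j, x⟫ ^ 2 := by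
  rw [← hA.eigenvectorBasis.sum_inner_mul_inner]
  refine Finset.sum_congr rfl fun j _ => ?_
  rw [← isSymmetric_toEuclideanLin_iff.mpr hA, hA.toEuclideanLin_eigenvectorBasis,
    real_inner_smul_left, real_inner_comm x]
  ring

end Spectral

section KyFan

noncomputable def sumSmallestEig {n : ℕ} (m : ℕ) (A : Matrix (Fin n) (Fin n) ℝ)
    (hA : A.IsHermitian) : ℝ :=
  ∑ i : Fin n with i.val < m, sortedEig A hA i

variable {n : ℕ} {A : Matrix (Fin n) (Fin n) ℝ} (hA : A.IsHermitian)
include hA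

lemma sumSmallestEig_min (m : ℕ) : sumSmallestEig (min m n) A hA = sumSmallestEig m A hA := by
  unfold sumSmallestEig
  congr 1
  ext i
  simp

lemma pSum_eq_sumSmallestEig (p : ℝ) :
    pSum p A hA = (1 - (p - ⌊p⌋₊)) * sumSmallestEig ⌊p⌋₊ A hA +
      (p - ⌊p⌋₊) * sumSmallestEig (⌊p⌋₊ + 1) A hA := by
  simp only [pSum, sumSmallestEig, Finset.sum_filter, Finset.mul_sum, ← Finset.sum_add_distrib]
  refine Finset.sum_congr rfl fun i _ => ?_
  rcases lt_trichotomy (i : ℕ) ⌊p⌋₊ with h | h | h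
  · rw [if_pos (by omega), if_pos h, if_pos (by omega)]
    ring
  · rw [if_neg (by omega), if_pos h, if_neg (by omega), if_pos (by omega)]
    ring
  · rw [if_neg (by omega), if_neg (by omega), if_neg (by omega), if_neg (by omega)]
    ring

/-- **Ky Fan's inequality**. -/
lemma sumSmallestEig_le_compressionTrace {ι : Type*} [Fintype ι]
    {v : ι → EuclideanSpace ℝ (Fin n)} (hv : Orthonormal ℝ v) :
    sumSmallestEig (Fintype.card ι) A hA ≤ compressionTrace v A := by
  set b := hA.eigenvectorBasis
  set σ := Tuple.sort hA.eigenvalues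
  -- `d j` is the squared length of the projection of `b j` onto the span of `v`.
  set d : Fin n → ℝ := fun j => ∑ i, ⟪b j, v i⟫ ^ 2 with hd
  have hd0 : ∀ j, 0 ≤ d j := fun j => Finset.sum_nonneg fun i _ => sq_nonneg _
  have hd1 : ∀ j, d j ≤ 1 := fun j => by
    simpa [hd, real_inner_comm, b.orthonormal.1 j] using hv.sum_inner_products_le (b j) (s := univ)
  have hdsum : ∑ j, d j = Fintype.card ι := by
    rw [hd, Finset.sum_comm]
    simp [b.sum_sq_inner_right, hv.1]
  have htrace : compressionTrace v A = ∑ j, d j * hA.eigenvalues j := by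
    simp only [compressionTrace_apply, hA.inner_toEuclideanLin_self, hd, Finset.sum_mul]
    rw [Finset.sum_comm]
    exact Finset.sum_congr rfl fun j _ => Finset.sum_congr rfl fun i _ => mul_comm _ _
  rw [htrace, ← Equiv.sum_comp σ]
  exact Fin.sum_filter_val_lt_le_sum_mul_of_monotone
    (by simpa using hv.linearIndependent.fintype_card_le_finrank)
    (Tuple.monotone_sort hA.eigenvalues) (fun i => hd0 _) (fun i => hd1 _)
    (by rw [Equiv.sum_comp σ, hdsum])

lemma exists_orthonormal_compressionTrace_eq {m : ℕ} (hm : m ≤ n) :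
    ∃ v : Fin m → EuclideanSpace ℝ (Fin n), Orthonormal ℝ v ∧
      compressionTrace v A = sumSmallestEig m A hA := by
  set σ := Tuple.sort hA.eigenvalues
  refine ⟨hA.eigenvectorBasis ∘ σ ∘ Fin.castLE hm,
    hA.eigenvectorBasis.orthonormal.comp _ (σ.injective.comp (Fin.castLE_injective hm)), ?_⟩
  simp only [compressionTrace_apply, Function.comp_apply, hA.toEuclideanLin_eigenvectorBasis,
    real_inner_smul_right, real_inner_self_eq_norm_sq, hA.eigenvectorBasis.orthonormal.1,
    one_pow, mul_one]
  symm
  exact Finset.sum_bij' (fun i hi => ⟨i, (mem_filter.mp hi).2⟩) (fun i _ => Fin.castLE hm i)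
    (by simp) (by simp) (by simp) (by simp) (by simp [sortedEig, σ])

end KyFan

section Cone

variable {n : ℕ} {p : ℝ}

lemma pSum_nonneg_of_posSemidef (hp : 0 ≤ p) {A : Matrix (Fin n) (Fin n) ℝ} (hA : A.PosSemidef) :
    0 ≤ pSum p A hA.isHermitian := by
  refine Finset.sum_nonneg fun i _ => mul_nonneg ?_ (hA.eigenvalues_nonneg _)
  have := Nat.floor_le hp
  split_ifs <;> linarith

variable (n p) in
/-- By Ky Fan's inequality, `pSum p · _` is the pointwise minimum of these linear functionals.
The frame sizes are capped at `n`, which changes nothing by `sumSmallestEig_min`. -/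
noncomputable def kyFanFunctionals : Set (Module.Dual ℝ (Matrix (Fin n) (Fin n) ℝ)) :=
  {f | ∃ (v : Fin (min ⌊p⌋₊ n) → EuclideanSpace ℝ (Fin n))
      (w : Fin (min (⌊p⌋₊ + 1) n) → EuclideanSpace ℝ (Fin n)),
      Orthonormal ℝ v ∧ Orthonormal ℝ w ∧
        f = (1 - (p - ⌊p⌋₊)) • compressionTrace v + (p - ⌊p⌋₊) • compressionTrace w}

lemma pCone_eq_selfAdjoint_inf_dual (hp : 0 ≤ p) :
    pCone n p = ↑(PointedCone.ofSubmodule (selfAdjoint.submodule ℝ (Matrix (Fin n) (Fin n) ℝ)) ⊓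
      PointedCone.dual LinearMap.id (kyFanFunctionals n p)) := by
  have hθ0 : 0 ≤ p - ⌊p⌋₊ := sub_nonneg.mpr (Nat.floor_le hp)
  have hθ1 : 0 ≤ 1 - (p - ⌊p⌋₊) := by linarith [Nat.lt_floor_add_one p]
  ext A
  simp only [pCone, SetLike.mem_coe, Submodule.mem_inf,
    PointedCone.mem_ofSubmodule_iff, PointedCone.mem_dual, LinearMap.id_apply]
  constructor
  · rintro ⟨hA, hA0⟩
    refine ⟨hA, ?_⟩
    rintro f ⟨v, w, hv, hw, rfl⟩
    have hv' := sumSmallestEig_le_compressionTrace hA hv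
    have hw' := sumSmallestEig_le_compressionTrace hA hw
    simp only [Fintype.card_fin, sumSmallestEig_min] at hv' hw'
    rw [pSum_eq_sumSmallestEig] at hA0
    simp only [LinearMap.add_apply, LinearMap.smul_apply, smul_eq_mul]
    exact hA0.trans (add_le_add (mul_le_mul_of_nonneg_left hv' hθ1)
      (mul_le_mul_of_nonneg_left hw' hθ0))
  · rintro ⟨hA : A.IsHermitian, hf⟩
    refine ⟨hA, ?_⟩
    obtain ⟨v, hv, hvA⟩ := exists_orthonormal_compressionTrace_eq hA (min_le_right ⌊p⌋₊ n)
    obtain ⟨w, hw, hwA⟩ := exists_orthonormal_compressionTrace_eq hA (min_le_right (⌊p⌋₊ + 1) n)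
    have := hf ⟨v, w, hv, hw, rfl⟩
    simp only [LinearMap.add_apply, LinearMap.smul_apply, smul_eq_mul, hvA, hwA,
      sumSmallestEig_min] at this
    rwa [pSum_eq_sumSmallestEig]

end Cone

theorem pCone_closed_convex_cone_general (n : ℕ) (p : ℝ) (hp : 1 ≤ p) :
    IsClosed (pCone n p) ∧ Convex ℝ (pCone n p) ∧
    (∀ c : ℝ, 0 ≤ c → ∀ A ∈ pCone n p, c • A ∈ pCone n p) ∧
    (∀ A : Matrix (Fin n) (Fin n) ℝ, A.PosSemidef → A ∈ pCone n p) := by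
  have hp0 : 0 ≤ p := zero_le_one.trans hp
  refine ⟨?_, ?_, ?_, fun A hA => ⟨hA.isHermitian, pSum_nonneg_of_posSemidef hp0 hA⟩⟩
  · rw [pCone_eq_selfAdjoint_inf_dual hp0, Submodule.coe_inf]
    exact (Submodule.closed_of_finiteDimensional _).inter
      (PointedCone.isClosed_dual fun f => f.continuous_of_finiteDimensional)
  · rw [pCone_eq_selfAdjoint_inf_dual hp0]
    exact PointedCone.convex _
  · rw [pCone_eq_selfAdjoint_inf_dual hp0]
    exact fun c hc A hA => PointedCone.smul_mem _ hc hA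

/-- For real `1 ≤ p ≤ n`, the set
`𝒫(p) = {A : λ_1(A) + ⋯ + λ_{⌊p⌋}(A) + (p − ⌊p⌋) λ_{⌊p⌋+1}(A) ≥ 0}` is a closed convex
cone containing the positive semidefinite matrices. -/
theorem pCone_closed_convex_cone (n : ℕ) (p : ℝ) (hp : 1 ≤ p) (hpn : p ≤ n) :
    IsClosed (pCone n p) ∧ Convex ℝ (pCone n p) ∧
    (∀ c : ℝ, 0 ≤ c → ∀ A ∈ pCone n p, c • A ∈ pCone n p) ∧
    (∀ A : Matrix (Fin n) (Fin n) ℝ, A.PosSemidef → A ∈ pCone n p) :=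
  pCone_closed_convex_cone_general n p hp
end

section
/- For the cone M = 𝒫(δ) = {A ∈ Sym²(ℝⁿ) : A + δ(tr A)·I ≥ 0} with δ > 0, the Riesz characteristic p_M = sup{p ∈ ℝ : I − p·P_e ∈ M for all unit vectors e} equals (δn + 1)/(δ + 1). -/
/-!
For a unit vector `e`, the matrix `A = I - p P_e` has trace `n - p`, so
`A + δ (tr A) I = a I - p P_e` with `a = 1 + δ (n - p)`. Its eigenvalues are `a - p` (on `e`) and
`a` (on `e^⊥`), so it is positive semidefinite exactly when `p ≤ a`, i.e. when
`p ≤ (δn + 1)/(δ + 1)`; for `δ > 0` this already forces `a ≥ 0`. The admissible `p` therefore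
form the half-line `(-∞, (δn + 1)/(δ + 1)]`, whose supremum is its endpoint.
-/

open Pointwise

/-- The Riesz characteristic of a cone `M ⊂ Sym²(ℝⁿ)`:
`p_M = sup {p ∈ ℝ : I − p P_e ∈ M for all unit vectors e}`, where `P_e = e eᵗ` is the
orthogonal projection onto the line `ℝe`. -/
noncomputable def rieszChar {n : ℕ} (M : Set (Matrix (Fin n) (Fin n) ℝ)) : ℝ :=
  sSup {p : ℝ | ∀ e : Fin n → ℝ, ∑ i, e i ^ 2 = 1 →
    (1 : Matrix (Fin n) (Fin n) ℝ) - p • Matrix.vecMulVec e e ∈ M}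

/-- The cone `𝒫(δ) = {A : A + δ (tr A) I ≥ 0}`. -/
def deltaCone (n : ℕ) (δ : ℝ) : Set (Matrix (Fin n) (Fin n) ℝ) :=
  {A | (A + δ • A.trace • (1 : Matrix (Fin n) (Fin n) ℝ)).PosSemidef}

open Matrix

section

variable {ι : Type*} [Fintype ι]

lemma sq_dotProduct_le_dotProduct_self_mul (e x : ι → ℝ) :
    (e ⬝ᵥ x) ^ 2 ≤ (e ⬝ᵥ e) * (x ⬝ᵥ x) := by
  simpa only [dotProduct, sq] using Finset.sum_mul_sq_le_sq_mul_sq Finset.univ e x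

variable [DecidableEq ι]

lemma dotProduct_smul_one_sub_smul_vecMulVec_mulVec (a p : ℝ) (e x : ι → ℝ) :
    x ⬝ᵥ ((a • 1 - p • vecMulVec e e) *ᵥ x) = a * (x ⬝ᵥ x) - p * (e ⬝ᵥ x) ^ 2 := by
  rw [sub_mulVec, smul_mulVec, smul_mulVec, one_mulVec, vecMulVec_mulVec, dotProduct_sub,
    dotProduct_smul, dotProduct_smul, op_smul_eq_smul, dotProduct_smul, dotProduct_comm x e]
  simp only [smul_eq_mul, sq]

lemma posSemidef_smul_one_sub_smul_vecMulVec {a p : ℝ} {e : ι → ℝ} (he : e ⬝ᵥ e = 1)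
    (ha : 0 ≤ a) (hpa : p ≤ a) : (a • 1 - p • vecMulVec e e).PosSemidef := by
  refine .of_dotProduct_mulVec_nonneg ?_ fun x => ?_
  · exact (isHermitian_one.smul (.all a)).sub
      ((posSemidef_vecMulVec_self_star e).isHermitian.smul (.all p))
  · have hcs := sq_dotProduct_le_dotProduct_self_mul e x
    rw [he, one_mul] at hcs
    rw [star_trivial, dotProduct_smul_one_sub_smul_vecMulVec_mulVec]
    -- `a |x|² - p ⟨e, x⟩² = a (|x|² - ⟨e, x⟩²) + (a - p) ⟨e, x⟩²`
    linarith [mul_nonneg ha (sub_nonneg.2 hcs), mul_nonneg (sub_nonneg.2 hpa) (sq_nonneg (e ⬝ᵥ x))]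

lemma le_of_posSemidef_smul_one_sub_smul_vecMulVec {a p : ℝ} {e : ι → ℝ} (he : e ⬝ᵥ e = 1)
    (h : (a • 1 - p • vecMulVec e e).PosSemidef) : p ≤ a := by
  have := h.dotProduct_mulVec_nonneg e
  rw [star_trivial, dotProduct_smul_one_sub_smul_vecMulVec_mulVec, he] at this
  linarith

lemma one_sub_smul_vecMulVec_add_smul_trace_smul_one (δ p : ℝ) {e : ι → ℝ} (he : e ⬝ᵥ e = 1) :
    (1 - p • vecMulVec e e) + δ • (1 - p • vecMulVec e e).trace • (1 : Matrix ι ι ℝ) =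
      (1 + δ * (Fintype.card ι - p)) • 1 - p • vecMulVec e e := by
  rw [trace_sub, trace_smul, trace_vecMulVec, he, trace_one, smul_smul, smul_eq_mul,
    mul_one, add_smul, one_smul]
  abel

end

lemma one_sub_smul_vecMulVec_mem_deltaCone_iff {n : ℕ} {δ p : ℝ} (hδ : 0 < δ) {e : Fin n → ℝ}
    (he : e ⬝ᵥ e = 1) :
    1 - p • vecMulVec e e ∈ deltaCone n δ ↔ p ≤ (δ * n + 1) / (δ + 1) := by
  rw [deltaCone, Set.mem_ofPred_eq, one_sub_smul_vecMulVec_add_smul_trace_smul_one δ p he,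
    Fintype.card_fin, le_div_iff₀ (by linarith)]
  constructor
  · intro h
    have := le_of_posSemidef_smul_one_sub_smul_vecMulVec he h
    linarith
  · intro hp
    refine posSemidef_smul_one_sub_smul_vecMulVec he ?_ (by linarith)
    rcases le_total p 0 with hp0 | hp0 <;> nlinarith

/-- The Riesz characteristic of `𝒫(δ)`, `δ > 0`, is `(δn + 1)/(δ + 1)`. -/
theorem rieszChar_deltaCone (n : ℕ) (hn : 0 < n) (δ : ℝ) (hδ : 0 < δ) :
    rieszChar (deltaCone n δ) = (δ * n + 1) / (δ + 1) := by
  have unit_iff (e : Fin n → ℝ) : ∑ i, e i ^ 2 = 1 ↔ e ⬝ᵥ e = 1 := by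
    simp only [dotProduct, sq]
  obtain ⟨e₀, he₀⟩ : ∃ e : Fin n → ℝ, ∑ i, e i ^ 2 = 1 :=
    ⟨Pi.single ⟨0, hn⟩ 1, by simp [sq, Pi.single_apply]⟩
  have hset : {p : ℝ | ∀ e : Fin n → ℝ, ∑ i, e i ^ 2 = 1 →
      (1 : Matrix (Fin n) (Fin n) ℝ) - p • vecMulVec e e ∈ deltaCone n δ} =
      Set.Iic ((δ * n + 1) / (δ + 1)) := by
    ext p
    refine ⟨fun hp => ?_, fun hp e he => ?_⟩
    · exact (one_sub_smul_vecMulVec_mem_deltaCone_iff hδ ((unit_iff e₀).1 he₀)).1 (hp e₀ he₀)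
    · exact (one_sub_smul_vecMulVec_mem_deltaCone_iff hδ ((unit_iff e).1 he)).2 hp
  rw [rieszChar, hset, csSup_Iic]
end

section
/- For a convex cone M ⊂ Sym²(ℝⁿ) containing 𝒫 with Riesz characteristic p_M, one has 𝒫(p) ⊂ M if and only if p ≤ p_M, where 𝒫(p) is the generalized p-convexity cone. -/
open Pointwise

/-- The Riesz characteristic `p_M = sup {p : I − p P_e ∈ M for all unit e}`, as an
extended real number. -/
noncomputable def rieszCharE {n : ℕ} (M : Set (Matrix (Fin n) (Fin n) ℝ)) : EReal :=
  sSup {x : EReal | ∃ p : ℝ, x = (p : EReal) ∧ ∀ e : Fin n → ℝ, ∑ i, e i ^ 2 = 1 →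
    (1 : Matrix (Fin n) (Fin n) ℝ) - p • Matrix.vecMulVec e e ∈ M}


/-!
The weights of `pSum` are at most `1` and add up to `p`. The eigenvalues of `I - p P_e` are at
most `1` and add up to `n - p`, so `∑ wᵢ λᵢ ≥ ∑ wᵢ + ∑ λᵢ - n = 0`, i.e. `I - p P_e ∈ 𝒫(p)`.

Conversely, let `C = λ_m` be the sorted eigenvalue at the index where the weights drop from `1`
to `0`; then `pSum A = p C - ∑ᵢ (C - μᵢ)⁺`. If this is `≥ 0`, then with `tᵢ = (C - μᵢ)⁺ / p` and
`s = ∑ tᵢ ≤ C` the spectral decomposition `A = ∑ μᵢ Pᵢ` rewrites as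
`A = ∑ tᵢ (I - p Pᵢ) + ∑ (max μᵢ C - s) Pᵢ`, a nonnegative combination of elements of `M`
once `p` is admissible, i.e. `I - p P_e ∈ M` for every unit `e`. Finally `p ≤ p_M` makes `p`
admissible, because the set of admissible `p` is closed and, by convexity, downward closed.
-/
open Matrix Finset

namespace Matrix.IsHermitian

variable {ι : Type*} [Fintype ι] [DecidableEq ι] {A : Matrix ι ι ℝ} (hA : A.IsHermitian)

lemma dotProduct_eigenvectorBasis_self (i : ι) :
    ⇑(hA.eigenvectorBasis i) ⬝ᵥ ⇑(hA.eigenvectorBasis i) = 1 := by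
  have h := real_inner_self_eq_norm_sq (hA.eigenvectorBasis i)
  rw [hA.eigenvectorBasis.orthonormal.1 i, EuclideanSpace.inner_eq_star_dotProduct] at h
  simpa using h

lemma sum_vecMulVec_eigenvectorBasis :
    ∑ i, vecMulVec ⇑(hA.eigenvectorBasis i) ⇑(hA.eigenvectorBasis i) = 1 := by
  have h := (mem_unitaryGroup_iff).mp hA.eigenvectorUnitary.2
  ext a b
  simp only [← congrFun (congrFun h a) b, mul_apply, sum_apply, vecMulVec_apply,
    star_apply, eigenvectorUnitary_apply, star_trivial]

lemma eq_sum_eigenvalues_smul_vecMulVec :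
    A = ∑ i, hA.eigenvalues i • vecMulVec ⇑(hA.eigenvectorBasis i) ⇑(hA.eigenvectorBasis i) := by
  conv_lhs => rw [hA.spectral_theorem]
  ext a b
  simp only [Unitary.conjStarAlgAut_apply, mul_apply, diagonal_apply, Function.comp_apply,
    sum_apply, smul_apply, vecMulVec_apply, eigenvectorUnitary_apply, smul_eq_mul, star_apply,
    star_trivial, mul_ite, mul_zero, sum_ite_eq', mem_univ, if_true, RCLike.ofReal_real_eq_id, id]
  exact sum_congr rfl fun i _ => by ring

lemma eigenvalues_le_one (h : (1 - A).PosSemidef) (i : ι) : hA.eigenvalues i ≤ 1 := by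
  have := h.dotProduct_mulVec_nonneg (hA.eigenvectorBasis i)
  rw [sub_mulVec, one_mulVec, hA.mulVec_eigenvectorBasis, star_trivial, dotProduct_sub,
    dotProduct_smul, hA.dotProduct_eigenvectorBasis_self, smul_eq_mul, mul_one] at this
  linarith

end Matrix.IsHermitian

noncomputable def pWeight (p : ℝ) (i : ℕ) : ℝ :=
  if i + 1 ≤ ⌊p⌋₊ then 1 else if i = ⌊p⌋₊ then p - ⌊p⌋₊ else 0

section pWeight

variable {p : ℝ}

lemma pWeight_le_one (p : ℝ) (i : ℕ) : pWeight p i ≤ 1 := by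
  have := Nat.lt_floor_add_one p
  unfold pWeight
  split_ifs <;> linarith

lemma pWeight_of_lt_floor {i : ℕ} (hi : i < ⌊p⌋₊) : pWeight p i = 1 :=
  if_pos hi

lemma pWeight_of_floor_lt {i : ℕ} (hi : ⌊p⌋₊ < i) : pWeight p i = 0 := by
  rw [pWeight, if_neg (by omega), if_neg (by omega)]

lemma sum_range_pWeight (hp : 0 ≤ p) (N : ℕ) : ∑ i ∈ range N, pWeight p i = min p N := by
  induction N with
  | zero => simp [hp]
  | succ N ih =>
    rw [sum_range_succ, ih]
    rcases lt_trichotomy N ⌊p⌋₊ with h | rfl | h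
    · have : (N + 1 : ℝ) ≤ p := by exact_mod_cast Nat.le_floor_iff hp |>.mp h
      rw [pWeight_of_lt_floor h]
      push_cast
      rw [min_eq_right (by linarith), min_eq_right this]
    · rw [pWeight, if_neg (by omega), if_pos rfl, min_eq_right (Nat.floor_le hp), Nat.cast_succ,
        min_eq_left (Nat.lt_floor_add_one p).le]
      ring
    · have : p < N := (Nat.floor_lt hp).mp h
      rw [pWeight_of_floor_lt h, min_eq_left this.le, min_eq_left (by push_cast; linarith)]
      ring

lemma sum_pWeight {n : ℕ} (hp : 0 ≤ p) (hpn : p ≤ n) : ∑ i : Fin n, pWeight p i = p := by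
  rw [Fin.sum_univ_eq_sum_range (pWeight p), sum_range_pWeight hp, min_eq_left hpn]

end pWeight

lemma pSum_eq_sum_pWeight_mul {n : ℕ} (p : ℝ) (A : Matrix (Fin n) (Fin n) ℝ)
    (hA : A.IsHermitian) : pSum p A hA = ∑ i : Fin n, pWeight p i * sortedEig A hA i :=
  rfl

lemma sum_mul_eq_mul_sub_sum_max_of_pivot {ι : Type*} [Fintype ι] [LinearOrder ι]
    {w x : ι → ℝ} (hx : Monotone x) {m : ι} (hlt : ∀ j < m, w j = 1)
    (hgt : ∀ j, m < j → w j = 0) :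
    ∑ j, w j * x j = (∑ j, w j) * x m - ∑ j, max (x m - x j) 0 := by
  rw [sum_mul, ← sum_sub_distrib]
  refine sum_congr rfl fun j _ => ?_
  rcases lt_trichotomy j m with h | rfl | h
  · rw [hlt j h, max_eq_left (sub_nonneg.2 (hx h.le))]
    ring
  · simp
  · rw [hgt j h, max_eq_right (sub_nonpos.2 (hx h.le))]
    ring

lemma sum_add_sum_le_sum_mul_add_card {ι : Type*} [Fintype ι] {w x : ι → ℝ}
    (hw : ∀ i, w i ≤ 1) (hx : ∀ i, x i ≤ 1) :
    ∑ i, w i + ∑ i, x i ≤ ∑ i, w i * x i + Fintype.card ι := by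
  have key : ∀ i, w i + x i ≤ w i * x i + 1 := fun i =>
    by nlinarith [mul_nonneg (sub_nonneg.2 (hw i)) (sub_nonneg.2 (hx i))]
  simpa [sum_add_distrib] using sum_le_sum fun i (_ : i ∈ univ) => key i

section sortedEig

variable {n : ℕ} {A : Matrix (Fin n) (Fin n) ℝ} (hA : A.IsHermitian)

lemma monotone_sortedEig : Monotone (sortedEig A hA) :=
  Tuple.monotone_sort _

lemma sum_comp_sortedEig (f : ℝ → ℝ) :
    ∑ j, f (sortedEig A hA j) = ∑ i, f (hA.eigenvalues i) :=
  Equiv.sum_comp (Tuple.sort hA.eigenvalues) (f ∘ hA.eigenvalues)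

lemma sum_sortedEig : ∑ j, sortedEig A hA j = ∑ i, hA.eigenvalues i :=
  sum_comp_sortedEig hA id

lemma exists_pSum_eq {p : ℝ} (hp : 0 ≤ p) (hpn : p ≤ n) (hn : 0 < n) :
    ∃ C, pSum p A hA = p * C - ∑ i, max (C - hA.eigenvalues i) 0 := by
  let m : Fin n := ⟨min ⌊p⌋₊ (n - 1), by omega⟩
  have hlt : ∀ j < m, pWeight p j = 1 := fun j hj =>
    pWeight_of_lt_floor (lt_of_lt_of_le (Fin.lt_def.1 hj) (min_le_left _ _))
  have hgt : ∀ j, m < j → pWeight p j = 0 := fun j hj =>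
    pWeight_of_floor_lt (by have := Fin.lt_def.1 hj; simp only [m] at this; omega)
  refine ⟨sortedEig A hA m, ?_⟩
  rw [pSum_eq_sum_pWeight_mul,
    sum_mul_eq_mul_sub_sum_max_of_pivot (monotone_sortedEig hA) hlt hgt, sum_pWeight hp hpn,
    sum_comp_sortedEig hA fun t => max (sortedEig A hA m - t) 0]

end sortedEig

lemma Matrix.posSemidef_vecMulVec_self {ι : Type*} [Fintype ι] (e : ι → ℝ) :
    (vecMulVec e e).PosSemidef := by
  simpa using posSemidef_vecMulVec_self_star e

lemma one_sub_smul_vecMulVec_mem_pCone {n : ℕ} {p : ℝ} (hp : 0 ≤ p) (hpn : p ≤ n)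
    {e : Fin n → ℝ} (he : ∑ i, e i ^ 2 = 1) : 1 - p • vecMulVec e e ∈ pCone n p := by
  have hP : (p • vecMulVec e e).PosSemidef := (posSemidef_vecMulVec_self e).smul hp
  have hA : (1 - p • vecMulVec e e).IsHermitian := isHermitian_one.sub hP.isHermitian
  have hle : ∀ i, hA.eigenvalues i ≤ 1 := hA.eigenvalues_le_one (by rwa [sub_sub_cancel])
  have htrace : ∑ i, hA.eigenvalues i = n - p := by
    have := hA.trace_eq_sum_eigenvalues
    simp only [trace_sub, trace_one, trace_smul, trace_vecMulVec, dotProduct, ← sq, he,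
      Fintype.card_fin, smul_eq_mul, mul_one, RCLike.ofReal_real_eq_id, id] at this
    linarith
  refine ⟨hA, ?_⟩
  have := sum_add_sum_le_sum_mul_add_card (w := fun j : Fin n => pWeight p j)
    (x := sortedEig _ hA) (fun j => pWeight_le_one p j) fun j => hle _
  rw [sum_pWeight hp hpn, sum_sortedEig hA, Fintype.card_fin] at this
  rw [pSum_eq_sum_pWeight_mul]
  linarith

section ConvexCone

variable {E : Type*} [AddCommGroup E] [Module ℝ E] {M : Set E}

lemma add_mem_of_convex_of_smul_mem (hconv : Convex ℝ M)
    (hcone : ∀ c : ℝ, 0 ≤ c → ∀ A ∈ M, c • A ∈ M) {A B : E} (hA : A ∈ M) (hB : B ∈ M) :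
    A + B ∈ M := by
  have := hcone 2 zero_le_two _ (hconv hA hB (by norm_num : (0 : ℝ) ≤ 1 / 2)
    (by norm_num : (0 : ℝ) ≤ 1 / 2) (by norm_num))
  rwa [smul_add, smul_smul, smul_smul, show (2 : ℝ) * (1 / 2) = 1 by norm_num, one_smul,
    one_smul] at this

lemma sum_mem_of_convex_of_smul_mem (hconv : Convex ℝ M)
    (hcone : ∀ c : ℝ, 0 ≤ c → ∀ A ∈ M, c • A ∈ M) (h0 : (0 : E) ∈ M) {ι : Type*}
    {s : Finset ι} {f : ι → E} (hf : ∀ i ∈ s, f i ∈ M) : ∑ i ∈ s, f i ∈ M :=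
  sum_induction f (· ∈ M) (fun _ _ => add_mem_of_convex_of_smul_mem hconv hcone) h0 hf

end ConvexCone

lemma IsClosed.mem_of_coe_le_sSup_image {S : Set ℝ} (hS : IsClosed S) (hS' : IsLowerSet S)
    {p : ℝ} (hp : (p : EReal) ≤ sSup ((↑) '' S)) : p ∈ S := by
  refine hS.closure_subset_iff.2 (fun q hq => ?_) (by rw [closure_Iio]; exact Set.self_mem_Iic)
  obtain ⟨_, ⟨q', hq', rfl⟩, hqq'⟩ := lt_sSup_iff.1 ((EReal.coe_lt_coe_iff.2 hq).trans_le hp)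
  exact hS' (EReal.coe_lt_coe_iff.1 hqq').le hq'

section rieszSet

variable {ι : Type*} [Fintype ι] [DecidableEq ι] {M : Set (Matrix ι ι ℝ)}

def rieszSet (M : Set (Matrix ι ι ℝ)) : Set ℝ :=
  {p | ∀ e : ι → ℝ, ∑ i, e i ^ 2 = 1 → 1 - p • vecMulVec e e ∈ M}

lemma rieszCharE_eq_sSup_rieszSet {n : ℕ} (M : Set (Matrix (Fin n) (Fin n) ℝ)) :
    rieszCharE M = sSup ((↑) '' rieszSet M) := by
  simp only [rieszCharE, rieszSet, Set.image, Set.mem_ofPred_eq, eq_comm, and_comm]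

lemma isClosed_rieszSet (hMcl : IsClosed M) : IsClosed (rieszSet M) := by
  simp only [rieszSet, Set.ofPred_forall]
  exact isClosed_iInter fun e => isClosed_iInter fun _ => hMcl.preimage (by fun_prop)

lemma isLowerSet_rieszSet (hconv : Convex ℝ M) (hPM : {A | A.PosSemidef} ⊆ M) :
    IsLowerSet (rieszSet M) := by
  intro q' q hqq' hq' e he
  rcases le_or_gt q 0 with hq | hq
  · refine hPM ?_
    rw [Set.mem_ofPred_eq, sub_eq_add_neg, ← neg_smul]
    exact PosSemidef.one.add ((posSemidef_vecMulVec_self e).smul (neg_nonneg.2 hq))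
  -- `1 - q P` is a convex combination of `1 - q' P` and `1`
  have hq'0 : 0 < q' := hq.trans_le hqq'
  convert hconv (hq' e he) (hPM PosSemidef.one) (div_nonneg hq.le hq'0.le)
    (sub_nonneg.2 ((div_le_one hq'0).2 hqq')) (add_sub_cancel _ _) using 1
  rw [smul_sub, smul_smul, div_mul_cancel₀ _ hq'0.ne', sub_smul, one_smul]
  abel

end rieszSet

lemma mem_of_sum_max_sub_eigenvalues_le {ι : Type*} [Fintype ι] [DecidableEq ι]
    {M : Set (Matrix ι ι ℝ)} (hconv : Convex ℝ M) (hcone : ∀ c : ℝ, 0 ≤ c → ∀ A ∈ M, c • A ∈ M)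
    (hPM : {A | A.PosSemidef} ⊆ M) {p : ℝ} (hp : 0 < p) (hpM : p ∈ rieszSet M)
    {A : Matrix ι ι ℝ} (hA : A.IsHermitian) {C : ℝ}
    (hC : ∑ i, max (C - hA.eigenvalues i) 0 ≤ p * C) : A ∈ M := by
  set μ := hA.eigenvalues
  set P : ι → Matrix ι ι ℝ := fun i =>
    vecMulVec ⇑(hA.eigenvectorBasis i) ⇑(hA.eigenvectorBasis i)
  set t : ι → ℝ := fun i => max (C - μ i) 0 / p
  set s := ∑ i, t i
  have hsC : s ≤ C := by
    rw [show s = (∑ i, max (C - μ i) 0) / p from (sum_div _ _ _).symm, div_le_iff₀ hp, mul_comm]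
    exact hC
  have hterm : ∀ i,
      t i • (1 - p • P i) + (max (μ i) C - s) • P i = t i • 1 + (μ i - s) • P i := by
    intro i
    have htp : t i * p = max (C - μ i) 0 := div_mul_cancel₀ _ hp.ne'
    have hmax : max (μ i) C = μ i + max (C - μ i) 0 := by
      rcases le_total (μ i) C with h | h
      · rw [max_eq_right h, max_eq_left (sub_nonneg.2 h)]; ring
      · rw [max_eq_left h, max_eq_right (sub_nonpos.2 h)]; ring
    rw [smul_sub, smul_smul, htp, hmax]
    module
  have hP : ∑ i, P i = 1 := hA.sum_vecMulVec_eigenvectorBasis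
  have hdecomp : A = ∑ i, (t i • (1 - p • P i) + (max (μ i) C - s) • P i) := calc
    A = ∑ i, μ i • P i := hA.eq_sum_eigenvalues_smul_vecMulVec
    _ = s • ∑ i, P i + ∑ i, (μ i - s) • P i := by
      simp only [sub_smul, sum_sub_distrib, smul_sum]
      abel
    _ = ∑ i, (t i • 1 + (μ i - s) • P i) := by rw [hP, sum_add_distrib, sum_smul]
    _ = _ := sum_congr rfl fun i _ => (hterm i).symm
  rw [hdecomp]
  refine sum_mem_of_convex_of_smul_mem hconv hcone (hPM PosSemidef.zero) fun i _ =>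
    add_mem_of_convex_of_smul_mem hconv hcone ?_ ?_
  · exact hcone _ (div_nonneg (le_max_right _ _) hp.le) _
      (hpM _ (by simpa [dotProduct, sq] using hA.dotProduct_eigenvectorBasis_self i))
  · exact hcone _ (sub_nonneg.2 (hsC.trans (le_max_right _ _))) _
      (hPM (posSemidef_vecMulVec_self _))

theorem pCone_subset_iff_le_rieszChar_general (n : ℕ) (M : Set (Matrix (Fin n) (Fin n) ℝ))
    (hMcl : IsClosed M) (hMconv : Convex ℝ M)
    (hMcone : ∀ c : ℝ, 0 ≤ c → ∀ A ∈ M, c • A ∈ M)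
    (hPM : {A : Matrix (Fin n) (Fin n) ℝ | A.PosSemidef} ⊆ M)
    (p : ℝ) (hp : 1 ≤ p) (hpn : p ≤ n) :
    pCone n p ⊆ M ↔ (p : EReal) ≤ rieszCharE M := by
  have hn : 0 < n := by exact_mod_cast hp.trans_lt' zero_lt_one |>.trans_le hpn
  rw [rieszCharE_eq_sSup_rieszSet]
  constructor
  · intro hsub
    exact le_sSup (Set.mem_image_of_mem _ fun e he =>
      hsub (one_sub_smul_vecMulVec_mem_pCone (by linarith) hpn he))
  · rintro hle A ⟨hA, hpA⟩
    have hpM := (isClosed_rieszSet hMcl).mem_of_coe_le_sSup_image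
      (isLowerSet_rieszSet hMconv hPM) hle
    obtain ⟨C, hC⟩ := exists_pSum_eq hA (by linarith) hpn hn
    exact mem_of_sum_max_sub_eigenvalues_le hMconv hMcone hPM (by linarith) hpM hA (C := C)
      (by linarith)

/-- **6.2.1.** For a closed convex cone `M ⊂ Sym²(ℝⁿ)` containing the
positive semidefinite matrices `𝒫`, and `1 ≤ p ≤ n`, one has `𝒫(p) ⊆ M ↔ p ≤ p_M`. -/
theorem pCone_subset_iff_le_rieszChar (n : ℕ) (M : Set (Matrix (Fin n) (Fin n) ℝ))
    (hMcl : IsClosed M) (hMconv : Convex ℝ M)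
    (hMcone : ∀ c : ℝ, 0 ≤ c → ∀ A ∈ M, c • A ∈ M)
    (hMsym : ∀ A ∈ M, A.IsHermitian)
    (hPM : {A : Matrix (Fin n) (Fin n) ℝ | A.PosSemidef} ⊆ M)
    (p : ℝ) (hp : 1 ≤ p) (hpn : p ≤ n) :
    pCone n p ⊆ M ↔ (p : EReal) ≤ rieszCharE M :=
  pCone_subset_iff_le_rieszChar_general n M hMcl hMconv hMcone hPM p hp hpn
end
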